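/- arXiv:2404.03773 — 7 statements merged into one kernel-verified Lean document; each statement's English description precedes it below -/
import Mathlib

section
/- Let η ≥ 0, v > 0, and let (Ω, F, (F_t)_{t≥0}, P) be a filtered probability space. Let Ṽ : [η,∞) × ℝ → [0,∞) be a continuous function such that (a) Ṽ(η,θ) = 0 for all θ ∈ ℝ; (b) Ṽ is continuous at r = η uniformly in θ, i.e. for every ε > 0 there is δ > 0 such that Ṽ(r,θ) < ε whenever η ≤ r < η + δ and θ ∈ ℝ; (c) there exist constants C, D ≥ 0 with Ṽ(r,θ) ≤ C·r + D for all (r,θ) ∈ [η,∞) × ℝ. Let (R_t, Θ_t)_{t≥0} be continuous adapted processes with values in [η,∞) × ℝ such that R_0 = r, Θ_0 = θ almost surely and |R_t − R_s| ≤ v·|t − s| for all s, t ≥ 0 almost surely, and let τ be a stopping time with E(τ) < ∞ and R_τ = η almost surely. If the process (t ∧ τ + Ṽ(R_{t∧τ}, Θ_{t∧τ}))_{t≥0} is a submartingale with respect to (F_t), then Ṽ(r, θ) ≤ E(τ). -/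
open MeasureTheory ProbabilityTheory Real
open scoped NNReal

/-! Since `t ∧ τ + Ṽ(R_{t∧τ}, Θ_{t∧τ})` is a submartingale starting at `Ṽ(r, θ)`,
`Ṽ(r, θ) ≤ E(t ∧ τ) + E Ṽ(R_{t∧τ}, Θ_{t∧τ}) ≤ E(τ) + E Ṽ(R_{t∧τ}, Θ_{t∧τ})`
for every `t`. As `t → ∞` the last expectation tends to `E Ṽ(R_τ, Θ_τ) = 0` by
dominated convergence: the speed bound gives `R_{t∧τ} ≤ r + v τ`, so the linear
growth of `Ṽ` dominates it by the integrable variable `C (r + v τ) + D`. -/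

open Filter Topology

lemma le_add_mul_of_abs_sub_le {f : ℝ≥0 → ℝ} {v : ℝ}
    (hf : ∀ s t : ℝ≥0, |f t - f s| ≤ v * |(t : ℝ) - (s : ℝ)|) (t : ℝ≥0) :
    f t ≤ f 0 + v * t := by
  have h := hf 0 t
  rw [NNReal.coe_zero, sub_zero, abs_of_nonneg t.coe_nonneg] at h
  linarith [le_abs_self (f t - f 0)]

namespace MeasureTheory

variable {Ω : Type*} {m : MeasurableSpace Ω} {μ : Measure Ω} {τ : Ω → ℝ≥0}

lemma Integrable.coe_min (hτ : Integrable (fun ω => (τ ω : ℝ)) μ) (t : ℝ≥0) :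
    Integrable (fun ω => ((min t (τ ω) : ℝ≥0) : ℝ)) μ := by
  refine hτ.mono' ?_ (ae_of_all _ fun ω => ?_)
  · simp_rw [NNReal.coe_min]
    exact aestronglyMeasurable_const.inf hτ.aestronglyMeasurable
  · rw [Real.norm_of_nonneg NNReal.zero_le_coe]
    exact_mod_cast min_le_right t (τ ω)

lemma Integrable.of_coe_min_add {Y : Ω → ℝ} (hτ : Integrable (fun ω => (τ ω : ℝ)) μ)
    {t : ℝ≥0} (hX : Integrable (fun ω => ((min t (τ ω) : ℝ≥0) : ℝ) + Y ω) μ) :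
    Integrable Y μ :=
  (hX.sub (hτ.coe_min t)).congr (ae_of_all _ fun _ => add_sub_cancel_left _ _)

lemma tendsto_integral_stopped_of_dominated {G : ℝ≥0 → Ω → ℝ} {h : Ω → ℝ}
    (hmeas : ∀ t, AEStronglyMeasurable (fun ω => G (min t (τ ω)) ω) μ)
    (hh : Integrable h μ) (hbound : ∀ t, ∀ᵐ ω ∂μ, ‖G (min t (τ ω)) ω‖ ≤ h ω)
    (hGτ : ∀ᵐ ω ∂μ, G (τ ω) ω = 0) :
    Tendsto (fun t => ∫ ω, G (min t (τ ω)) ω ∂μ) atTop (𝓝 0) := by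
  have hlim : ∀ᵐ ω ∂μ, Tendsto (fun t => G (min t (τ ω)) ω) atTop (𝓝 0) := by
    filter_upwards [hGτ] with ω hω
    refine tendsto_const_nhds.congr' ?_
    filter_upwards [eventually_ge_atTop (τ ω)] with t ht
    rw [min_eq_right ht, hω]
  simpa using tendsto_integral_filter_of_dominated_convergence h
    (Eventually.of_forall hmeas) (Eventually.of_forall hbound) hh hlim

lemma Submartingale.integral_zero_le_integral_of_coe_min_add {ℱ : Filtration ℝ≥0 m}
    [SigmaFiniteFiltration μ ℱ] {Y : ℝ≥0 → Ω → ℝ}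
    (hsub : Submartingale (fun t ω => ((min t (τ ω) : ℝ≥0) : ℝ) + Y t ω) ℱ μ)
    (hτ : Integrable (fun ω => (τ ω : ℝ)) μ)
    (hY : Tendsto (fun t => ∫ ω, Y t ω ∂μ) atTop (𝓝 0)) :
    ∫ ω, Y 0 ω ∂μ ≤ ∫ ω, (τ ω : ℝ) ∂μ := by
  have hle : ∀ t, ∫ ω, Y 0 ω ∂μ ≤ ∫ ω, (τ ω : ℝ) ∂μ + ∫ ω, Y t ω ∂μ := fun t => calc
    ∫ ω, Y 0 ω ∂μ = ∫ ω, ((min 0 (τ ω) : ℝ≥0) : ℝ) + Y 0 ω ∂μ := by simp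
    _ ≤ ∫ ω, ((min t (τ ω) : ℝ≥0) : ℝ) + Y t ω ∂μ := by
      simpa using hsub.setIntegral_le bot_le MeasurableSet.univ
    _ = ∫ ω, ((min t (τ ω) : ℝ≥0) : ℝ) ∂μ + ∫ ω, Y t ω ∂μ :=
      integral_add (hτ.coe_min t) (hτ.of_coe_min_add (hsub.integrable t))
    _ ≤ ∫ ω, (τ ω : ℝ) ∂μ + ∫ ω, Y t ω ∂μ := add_le_add_left
      (integral_mono (hτ.coe_min t) hτ fun ω => by exact_mod_cast min_le_right t (τ ω)) _
  simpa using ge_of_tendsto' (hY.const_add _) hle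

end MeasureTheory

theorem verification_submartingale_general
    {Ω : Type*} {m : MeasurableSpace Ω} {μ : Measure Ω} [IsProbabilityMeasure μ]
    (ℱ : MeasureTheory.Filtration ℝ≥0 m)
    (η v : ℝ) (hv : 0 < v)
    (Vt : ℝ → ℝ → ℝ)
    (hVnonneg : ∀ r θ : ℝ, η ≤ r → 0 ≤ Vt r θ)
    (ha : ∀ θ : ℝ, Vt η θ = 0)
    (C D : ℝ) (hC : 0 ≤ C)
    (hc : ∀ r θ : ℝ, η ≤ r → Vt r θ ≤ C * r + D)
    (R Θ : ℝ≥0 → Ω → ℝ)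
    (hRrange : ∀ t ω, η ≤ R t ω)
    (r θ : ℝ)
    (hR0 : ∀ᵐ ω ∂μ, R 0 ω = r) (hΘ0 : ∀ᵐ ω ∂μ, Θ 0 ω = θ)
    (hLip : ∀ᵐ ω ∂μ, ∀ s t : ℝ≥0, |R t ω - R s ω| ≤ v * |(t : ℝ) - (s : ℝ)|)
    (τ : Ω → ℝ≥0)
    (hτint : Integrable (fun ω => (τ ω : ℝ)) μ)
    (hRτ : ∀ᵐ ω ∂μ, R (τ ω) ω = η)
    (hsub : Submartingale
      (fun (t : ℝ≥0) ω => ((min t (τ ω) : ℝ≥0) : ℝ) + Vt (R (min t (τ ω)) ω) (Θ (min t (τ ω)) ω)) ℱ μ) :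
    Vt r θ ≤ ∫ ω, (τ ω : ℝ) ∂μ := by
  set Y : ℝ≥0 → Ω → ℝ := fun t ω => Vt (R (min t (τ ω)) ω) (Θ (min t (τ ω)) ω)
  have hstart : ∫ ω, Y 0 ω ∂μ = Vt r θ := by
    rw [integral_congr_ae (g := fun _ => Vt r θ)]
    · simp
    · filter_upwards [hR0, hΘ0] with ω h1 h2
      simp [Y, h1, h2]
  have hbound : ∀ t, ∀ᵐ ω ∂μ, ‖Y t ω‖ ≤ C * (r + v * τ ω) + D := fun t => by
    filter_upwards [hLip, hR0] with ω hL h0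
    have hR : R (min t (τ ω)) ω ≤ r + v * τ ω := calc
      R (min t (τ ω)) ω ≤ R 0 ω + v * (min t (τ ω) : ℝ≥0) := le_add_mul_of_abs_sub_le hL _
      _ ≤ r + v * τ ω := by rw [h0]; gcongr; exact min_le_right t (τ ω)
    rw [Real.norm_of_nonneg (hVnonneg _ _ (hRrange _ _))]
    exact (hc _ _ (hRrange _ _)).trans (by gcongr)
  have hdom : Integrable (fun ω => C * (r + v * τ ω) + D) μ :=
    (((integrable_const r).add (hτint.const_mul v)).const_mul C).add (integrable_const D)
  have hvanish : Tendsto (fun t => ∫ ω, Y t ω ∂μ) atTop (𝓝 0) :=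
    tendsto_integral_stopped_of_dominated (G := fun s ω => Vt (R s ω) (Θ s ω))
      (fun t => (hτint.of_coe_min_add (hsub.integrable t)).aestronglyMeasurable)
      hdom hbound (by filter_upwards [hRτ] with ω hω; rw [hω, ha])
  exact hstart ▸ hsub.integral_zero_le_integral_of_coe_min_add hτint hvanish

/-- **Verification theorem, part 1 (submartingale inequality).**
If `Ṽ` is a candidate value function vanishing on the target circle `r = η`,
continuous at `r = η` uniformly in `θ`, of at most linear growth, and if for the
position process `(R, Θ)` of an admissible strategy the process
`t ↦ t ∧ τ + Ṽ(R_{t∧τ}, Θ_{t∧τ})` is a submartingale, then `Ṽ(r,θ) ≤ E(τ)`. -/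
theorem verification_submartingale
    {Ω : Type*} {m : MeasurableSpace Ω} {μ : Measure Ω} [IsProbabilityMeasure μ]
    (ℱ : MeasureTheory.Filtration ℝ≥0 m)
    (η v : ℝ) (hη : 0 ≤ η) (hv : 0 < v)
    (Vt : ℝ → ℝ → ℝ)
    (hVcont : ContinuousOn (fun p : ℝ × ℝ => Vt p.1 p.2) (Set.Ici η ×ˢ Set.univ))
    (hVnonneg : ∀ r θ : ℝ, η ≤ r → 0 ≤ Vt r θ)
    (ha : ∀ θ : ℝ, Vt η θ = 0)
    (hb : ∀ ε : ℝ, 0 < ε → ∃ δ : ℝ, 0 < δ ∧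
      ∀ r θ : ℝ, η ≤ r → r < η + δ → Vt r θ < ε)
    (C D : ℝ) (hC : 0 ≤ C) (hD : 0 ≤ D)
    (hc : ∀ r θ : ℝ, η ≤ r → Vt r θ ≤ C * r + D)
    (R Θ : ℝ≥0 → Ω → ℝ)
    (hRcont : ∀ ω, Continuous fun t => R t ω)
    (hΘcont : ∀ ω, Continuous fun t => Θ t ω)
    (hRadapted : Adapted ℱ R) (hΘadapted : Adapted ℱ Θ)
    (hRrange : ∀ t ω, η ≤ R t ω)
    (r θ : ℝ) (hr : η ≤ r)
    (hR0 : ∀ᵐ ω ∂μ, R 0 ω = r) (hΘ0 : ∀ᵐ ω ∂μ, Θ 0 ω = θ)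
    (hLip : ∀ᵐ ω ∂μ, ∀ s t : ℝ≥0, |R t ω - R s ω| ≤ v * |(t : ℝ) - (s : ℝ)|)
    (τ : Ω → ℝ≥0) (hτ : IsStoppingTime ℱ (fun ω => (τ ω : WithTop ℝ≥0)))
    (hτint : Integrable (fun ω => (τ ω : ℝ)) μ)
    (hRτ : ∀ᵐ ω ∂μ, R (τ ω) ω = η)
    (hsub : Submartingale
      (fun (t : ℝ≥0) ω => ((min t (τ ω) : ℝ≥0) : ℝ) + Vt (R (min t (τ ω)) ω) (Θ (min t (τ ω)) ω)) ℱ μ) :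
    Vt r θ ≤ ∫ ω, (τ ω : ℝ) ∂μ :=
  verification_submartingale_general ℱ η v hv Vt hVnonneg ha C D hC hc R Θ hRrange r θ hR0 hΘ0 hLip
    τ hτint hRτ hsub
end

section
/- Let η ≥ 0, v > 0, and let (Ω, F, (F_t)_{t≥0}, P) be a filtered probability space. Let Ṽ : [η,∞) × ℝ → [0,∞) be a continuous function such that (a) Ṽ(η,θ) = 0 for all θ ∈ ℝ; (b) Ṽ is continuous at r = η uniformly in θ, i.e. for every ε > 0 there is δ > 0 such that Ṽ(r,θ) < ε whenever η ≤ r < η + δ and θ ∈ ℝ; (c) there exist constants C, D ≥ 0 with Ṽ(r,θ) ≤ C·r + D for all (r,θ) ∈ [η,∞) × ℝ. Let (R_t, Θ_t)_{t≥0} be continuous adapted processes with values in [η,∞) × ℝ such that R_0 = r, Θ_0 = θ almost surely and |R_t − R_s| ≤ v·|t − s| for all s, t ≥ 0 almost surely, and let τ be a stopping time with E(τ) < ∞ and R_τ = η almost surely. If the process (t ∧ τ + Ṽ(R_{t∧τ}, Θ_{t∧τ}))_{t≥0} is a martingale with respect to (F_t), then Ṽ(r, θ) = E(τ). -/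
open MeasureTheory ProbabilityTheory Real
open scoped NNReal

/-! Optional stopping at `t ∧ τ`: the martingale has constant expectation `Ṽ(r, θ)`, and as
`t → ∞` it converges to `τ` because `Ṽ` vanishes at `R_τ = η`. The convergence of expectations
is dominated convergence with dominating function `τ + C (r + v τ) + D`, which comes from the
linear growth of `Ṽ` and the speed bound `R_t ≤ r + v t`. -/

open Filter Topology

theorem integral_eq_of_tendsto_of_integral_eq_const {Ω : Type*} [MeasurableSpace Ω]
    {μ : Measure Ω} {F : ℕ → Ω → ℝ} {f g : Ω → ℝ} {c : ℝ}
    (hF : ∀ n, AEStronglyMeasurable (F n) μ) (hg : Integrable g μ)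
    (hFg : ∀ n, ∀ᵐ ω ∂μ, ‖F n ω‖ ≤ g ω)
    (hlim : ∀ᵐ ω ∂μ, Tendsto (fun n => F n ω) atTop (𝓝 (f ω)))
    (hconst : ∀ n, ∫ ω, F n ω ∂μ = c) :
    ∫ ω, f ω ∂μ = c :=
  tendsto_nhds_unique (tendsto_integral_of_dominated_convergence g hF hg hFg hlim)
    (by simp only [hconst, tendsto_const_nhds])

theorem MeasureTheory.Martingale.integral_eq {Ω ι : Type*} [Preorder ι] {m : MeasurableSpace Ω}
    {μ : Measure Ω} [IsFiniteMeasure μ] {ℱ : Filtration ι m} {f : ι → Ω → ℝ}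
    (hf : Martingale f ℱ μ) {i j : ι} (hij : i ≤ j) :
    ∫ ω, f i ω ∂μ = ∫ ω, f j ω ∂μ := by
  simpa only [setIntegral_univ] using hf.setIntegral_eq hij MeasurableSet.univ

theorem eventually_min_natCast_eq (τ : ℝ≥0) : ∀ᶠ n : ℕ in atTop, min (n : ℝ≥0) τ = τ := by
  filter_upwards [eventually_ge_atTop ⌈τ⌉₊] with n hn
  exact min_eq_right ((Nat.le_ceil τ).trans (by exact_mod_cast hn))

theorem le_add_mul_of_abs_sub_le_s1 {R : ℝ≥0 → ℝ} {v T : ℝ} (hv : 0 ≤ v)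
    (hR : ∀ t, |R t - R 0| ≤ v * |(t : ℝ) - ((0 : ℝ≥0) : ℝ)|) {s : ℝ≥0} (hsT : (s : ℝ) ≤ T) :
    R s ≤ R 0 + v * T := by
  have hs := hR s
  rw [NNReal.coe_zero, sub_zero, abs_of_nonneg s.coe_nonneg] at hs
  linarith [(abs_le.mp hs).2, mul_le_mul_of_nonneg_left hsT hv]

theorem norm_add_le_of_linear_growth {V : ℝ → ℝ → ℝ} {η C D ρ φ r v s T : ℝ}
    (hVnonneg : ∀ r θ : ℝ, η ≤ r → 0 ≤ V r θ) (hC : 0 ≤ C)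
    (hc : ∀ r θ : ℝ, η ≤ r → V r θ ≤ C * r + D)
    (hs : 0 ≤ s) (hsT : s ≤ T) (hηρ : η ≤ ρ) (hρ : ρ ≤ r + v * T) :
    ‖s + V ρ φ‖ ≤ T + (C * (r + v * T) + D) := by
  rw [Real.norm_eq_abs, abs_of_nonneg (add_nonneg hs (hVnonneg ρ φ hηρ))]
  linarith [hc ρ φ hηρ, mul_le_mul_of_nonneg_left hρ hC]

theorem verification_martingale_general
    {Ω : Type*} {m : MeasurableSpace Ω} {μ : Measure Ω} [IsProbabilityMeasure μ]
    (ℱ : MeasureTheory.Filtration ℝ≥0 m)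
    (η v : ℝ) (hv : 0 < v)
    (Vt : ℝ → ℝ → ℝ)
    (hVnonneg : ∀ r θ : ℝ, η ≤ r → 0 ≤ Vt r θ)
    (ha : ∀ θ : ℝ, Vt η θ = 0)
    (C D : ℝ) (hC : 0 ≤ C)
    (hc : ∀ r θ : ℝ, η ≤ r → Vt r θ ≤ C * r + D)
    (R Θ : ℝ≥0 → Ω → ℝ)
    (hRrange : ∀ t ω, η ≤ R t ω)
    (r θ : ℝ)
    (hR0 : ∀ᵐ ω ∂μ, R 0 ω = r) (hΘ0 : ∀ᵐ ω ∂μ, Θ 0 ω = θ)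
    (hLip : ∀ᵐ ω ∂μ, ∀ s t : ℝ≥0, |R t ω - R s ω| ≤ v * |(t : ℝ) - (s : ℝ)|)
    (τ : Ω → ℝ≥0)
    (hτint : Integrable (fun ω => (τ ω : ℝ)) μ)
    (hRτ : ∀ᵐ ω ∂μ, R (τ ω) ω = η)
    (hmart : Martingale
      (fun (t : ℝ≥0) ω => ((min t (τ ω) : ℝ≥0) : ℝ) + Vt (R (min t (τ ω)) ω) (Θ (min t (τ ω)) ω)) ℱ μ) :
    Vt r θ = ∫ ω, (τ ω : ℝ) ∂μ := by
  set X : ℝ≥0 → Ω → ℝ := fun t ω =>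
    ((min t (τ ω) : ℝ≥0) : ℝ) + Vt (R (min t (τ ω)) ω) (Θ (min t (τ ω)) ω) with hX
  have hstart : ∫ ω, X 0 ω ∂μ = Vt r θ := by
    rw [integral_congr_ae (g := fun _ => Vt r θ) (by
      filter_upwards [hR0, hΘ0] with ω hRω hΘω
      simp [hX, hRω, hΘω]), integral_const, probReal_univ, one_smul]
  have hdom : ∀ n : ℕ, ∀ᵐ ω ∂μ, ‖X n ω‖ ≤ τ ω + (C * (r + v * τ ω) + D) := fun n => by
    filter_upwards [hR0, hLip] with ω hRω hLipω
    have hmin : ((min (n : ℝ≥0) (τ ω) : ℝ≥0) : ℝ) ≤ τ ω := by exact_mod_cast min_le_right _ _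
    refine norm_add_le_of_linear_growth hVnonneg hC hc NNReal.zero_le_coe hmin (hRrange _ _) ?_
    simpa only [hRω] using le_add_mul_of_abs_sub_le_s1 hv.le (hLipω 0) hmin
  have hlim : ∀ᵐ ω ∂μ, Tendsto (fun n : ℕ => X n ω) atTop (𝓝 (τ ω)) := by
    filter_upwards [hRτ] with ω hRτω
    refine tendsto_const_nhds.congr' ?_
    filter_upwards [eventually_min_natCast_eq (τ ω)] with n hn
    simp only [hX, hn, hRτω, ha, add_zero]
  have hdom_int : Integrable (fun ω => (τ ω : ℝ) + (C * (r + v * τ ω) + D)) μ :=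
    hτint.add ((((integrable_const r).add (hτint.const_mul v)).const_mul C).add
      (integrable_const D))
  exact (integral_eq_of_tendsto_of_integral_eq_const
    (fun n => (hmart.integrable n).aestronglyMeasurable) hdom_int hdom hlim
    (fun n => (hmart.integral_eq (zero_le : 0 ≤ (n : ℝ≥0))).symm.trans hstart)).symm

/-- **Verification theorem, part 2 (martingale equality).**
If `Ṽ` is a candidate value function vanishing on the target circle `r = η`,
continuous at `r = η` uniformly in `θ`, of at most linear growth, and if for the
position process `(R, Θ)` of an admissible strategy the process
`t ↦ t ∧ τ + Ṽ(R_{t∧τ}, Θ_{t∧τ})` is a martingale, then `Ṽ(r,θ) = E(τ)`. -/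
theorem verification_martingale
    {Ω : Type*} {m : MeasurableSpace Ω} {μ : Measure Ω} [IsProbabilityMeasure μ]
    (ℱ : MeasureTheory.Filtration ℝ≥0 m)
    (η v : ℝ) (hη : 0 ≤ η) (hv : 0 < v)
    (Vt : ℝ → ℝ → ℝ)
    (hVcont : ContinuousOn (fun p : ℝ × ℝ => Vt p.1 p.2) (Set.Ici η ×ˢ Set.univ))
    (hVnonneg : ∀ r θ : ℝ, η ≤ r → 0 ≤ Vt r θ)
    (ha : ∀ θ : ℝ, Vt η θ = 0)
    (hb : ∀ ε : ℝ, 0 < ε → ∃ δ : ℝ, 0 < δ ∧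
      ∀ r θ : ℝ, η ≤ r → r < η + δ → Vt r θ < ε)
    (C D : ℝ) (hC : 0 ≤ C) (hD : 0 ≤ D)
    (hc : ∀ r θ : ℝ, η ≤ r → Vt r θ ≤ C * r + D)
    (R Θ : ℝ≥0 → Ω → ℝ)
    (hRcont : ∀ ω, Continuous fun t => R t ω)
    (hΘcont : ∀ ω, Continuous fun t => Θ t ω)
    (hRadapted : Adapted ℱ R) (hΘadapted : Adapted ℱ Θ)
    (hRrange : ∀ t ω, η ≤ R t ω)
    (r θ : ℝ) (hr : η ≤ r)
    (hR0 : ∀ᵐ ω ∂μ, R 0 ω = r) (hΘ0 : ∀ᵐ ω ∂μ, Θ 0 ω = θ)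
    (hLip : ∀ᵐ ω ∂μ, ∀ s t : ℝ≥0, |R t ω - R s ω| ≤ v * |(t : ℝ) - (s : ℝ)|)
    (τ : Ω → ℝ≥0) (hτ : IsStoppingTime ℱ (fun ω => (τ ω : WithTop ℝ≥0)))
    (hτint : Integrable (fun ω => (τ ω : ℝ)) μ)
    (hRτ : ∀ᵐ ω ∂μ, R (τ ω) ω = η)
    (hmart : Martingale
      (fun (t : ℝ≥0) ω => ((min t (τ ω) : ℝ≥0) : ℝ) + Vt (R (min t (τ ω)) ω) (Θ (min t (τ ω)) ω)) ℱ μ) :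
    Vt r θ = ∫ ω, (τ ω : ℝ) ∂μ :=
  verification_martingale_general ℱ η v hv Vt hVnonneg ha C D hC hc R Θ hRrange r θ hR0 hΘ0 hLip τ
    hτint hRτ hmart
end

section
/- Let α ∈ (0, π/8], v > 0 and R_ζ > 0, and set d₁ = sin(α/2) tan α + 1. Let β : [0,∞) → ℝ be a continuous function with |β_t| < α/2 for all t ≥ 0, and define Y_t = sin(β_t)·R_ζ sin α + cos(β_t)·R_ζ cos α − v ∫₀^t cos(β_t − β_s) ds for t ≥ 0. If T ≥ 0 satisfies Y_T = 0, then cos(3α/2)·R_ζ < T v < d₁·R_ζ. -/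
/-!
Setting `Y_T = 0` gives `v ∫₀ᵀ cos(β_T − β_s) ds = R_ζ cos(α − β_T)`. Since `|β_T − β_s| < α`,
the integral lies between `T cos α` and `T`, while `α − β_T ∈ (α/2, 3α/2)` pins
`cos(α − β_T)` strictly between `cos(3α/2)` and `cos(α/2)`. The lower bound follows at once;
the upper one from `cos(α/2) = cos α cos(α/2) + sin α sin(α/2) < d₁ cos α`.
-/

open Real MeasureTheory

theorem Real.cos_le_cos_of_abs_le {x a : ℝ} (hxa : |x| ≤ a) (ha : a ≤ π) : cos a ≤ cos x := by
  rw [← cos_abs x]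
  exact cos_le_cos_of_nonneg_of_le_pi (abs_nonneg x) ha hxa

theorem Real.cos_half_lt_mul_cos {α : ℝ} (h0 : 0 < α) (hα : α < π / 2) :
    cos (α / 2) < (sin (α / 2) * tan α + 1) * cos α := by
  have hcos : 0 < cos α := cos_pos_of_mem_Ioo ⟨by linarith, hα⟩
  have hhalf : cos (α / 2) < 1 := by
    simpa using cos_lt_cos_of_nonneg_of_le_pi le_rfl (by linarith [pi_pos]) (half_pos h0)
  have hsplit : cos (α / 2) = cos α * cos (α / 2) + sin α * sin (α / 2) := by
    rw [← cos_sub, sub_half]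
  have htan : tan α * cos α = sin α := by
    rw [tan_eq_sin_div_cos]; field_simp
  rw [hsplit]
  linear_combination mul_lt_mul_of_pos_left hhalf hcos - sin (α / 2) * htan

theorem intervalIntegral.integral_cos_le {f : ℝ → ℝ} (hf : Continuous f) {a b : ℝ} (hab : a ≤ b) :
    ∫ s in a..b, cos (f s) ≤ b - a := by
  simpa using intervalIntegral.integral_mono_on hab ((continuous_cos.comp hf).intervalIntegrable a b)
    (intervalIntegrable_const (μ := volume)) fun s _ ↦ cos_le_one (f s)

theorem intervalIntegral.mul_cos_le_integral_cos {f : ℝ → ℝ} (hf : Continuous f) {a b c : ℝ}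
    (hab : a ≤ b) (hc : c ≤ π) (hfc : ∀ s ∈ Set.Icc a b, |f s| ≤ c) :
    (b - a) * cos c ≤ ∫ s in a..b, cos (f s) := by
  simpa using intervalIntegral.integral_mono_on hab (intervalIntegrable_const (μ := volume))
    ((continuous_cos.comp hf).intervalIntegrable a b) fun s hs ↦ cos_le_cos_of_abs_le (hfc s hs) hc

/-- **Bounds on the axis-crossing time of a boat beating upwind in a calm wind.**
A boat on starboard tack starting at `(Rζ sin α, Rζ cos α)` in a wind whose
direction `β` never deviates by more than `α/2` crosses the horizontal axis
(`Y_T = 0`) at a time `T` satisfying `cos(3α/2)·Rζ < T v < d₁·Rζ`,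
where `d₁ = sin(α/2) tan α + 1`. -/
theorem crossing_time_bounds
    (α v Rζ : ℝ) (hα : α ∈ Set.Ioc 0 (π / 8)) (hv : 0 < v) (hRζ : 0 < Rζ)
    (d₁ : ℝ) (hd₁ : d₁ = Real.sin (α / 2) * Real.tan α + 1)
    (β : ℝ → ℝ) (hβcont : Continuous β) (hβ : ∀ t : ℝ, 0 ≤ t → |β t| < α / 2)
    (Y : ℝ → ℝ)
    (hY : ∀ t : ℝ, Y t =
      Real.sin (β t) * (Rζ * Real.sin α) + Real.cos (β t) * (Rζ * Real.cos α)
        - v * ∫ s in (0:ℝ)..t, Real.cos (β t - β s))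
    (T : ℝ) (hT : 0 ≤ T) (hYT : Y T = 0) :
    Real.cos (3 * α / 2) * Rζ < T * v ∧ T * v < d₁ * Rζ := by
  obtain ⟨hα0, hα8⟩ := hα
  have hπ := pi_pos
  set I := ∫ s in (0:ℝ)..T, cos (β T - β s)
  have hcross : v * I = Rζ * cos (α - β T) := by
    rw [cos_sub]; linear_combination hYT.symm.trans (hY T)
  have hf : Continuous fun s ↦ β T - β s := continuous_const.sub hβcont
  have hIT : I ≤ T := by simpa using intervalIntegral.integral_cos_le hf hT
  have hTI : T * cos α ≤ I := by
    have hclose : ∀ s ∈ Set.Icc 0 T, |β T - β s| ≤ α := fun s hs ↦ by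
      linarith [abs_sub (β T) (β s), hβ T hT, hβ s hs.1]
    simpa using intervalIntegral.mul_cos_le_integral_cos hf hT (by linarith) hclose
  obtain ⟨hβT₁, hβT₂⟩ := abs_lt.mp (hβ T hT)
  have hlow : cos (3 * α / 2) < cos (α - β T) :=
    cos_lt_cos_of_nonneg_of_le_pi (by linarith) (by linarith) (by linarith)
  have hhigh : cos (α - β T) < cos (α / 2) :=
    cos_lt_cos_of_nonneg_of_le_pi (by linarith) (by linarith) (by linarith)
  have hd₁cos : cos (α / 2) < d₁ * cos α := hd₁ ▸ cos_half_lt_mul_cos hα0 (by linarith)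
  constructor
  · nlinarith [mul_le_mul_of_nonneg_left hIT hv.le]
  · have hcos : 0 < cos α := cos_pos_of_mem_Ioo ⟨by linarith, by linarith⟩
    nlinarith [mul_le_mul_of_nonneg_left hTI hv.le]
end

section
/- Let v > 0, η > 0 and let n be a positive integer with 1/n < η. With μ₁*, μ₂* and φ_n defined as in the context, there exists a constant C ≥ 0 such that for all r₁, r₂ > 0 and all θ₁, θ₂ ∈ ℝ: (r₁ − r₂)·(φ_n(r₁)μ₁*(θ₁) − φ_n(r₂)μ₁*(θ₂)) + (θ₁ − θ₂)·(φ_n(r₁)μ₂*(r₁,θ₁) − φ_n(r₂)μ₂*(r₂,θ₂)) ≤ C·((r₁ − r₂)² + (θ₁ − θ₂)²). -/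
open Real

/-- Reduce an angle to the base interval `[-π/4, 7π/4)`. -/
noncomputable def wrapBase (θ : ℝ) : ℝ := toIcoMod Real.two_pi_pos (-(π / 4)) θ

/-- Radial drift on starboard tack (`a = +1`), `2π`-periodic in `θ`. -/
noncomputable def mu1plus (v θ : ℝ) : ℝ :=
  if wrapBase θ < π / 2 then -v * Real.sin (wrapBase θ)
  else if wrapBase θ < π then -v
  else v * Real.cos (wrapBase θ)

/-- Angular drift on starboard tack (`a = +1`), `2π`-periodic in `θ`. -/
noncomputable def mu2plus (v r θ : ℝ) : ℝ :=
  if wrapBase θ < π / 2 then -v * Real.cos (wrapBase θ) / r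
  else if wrapBase θ < π then 0
  else -v * Real.sin (wrapBase θ) / r

/-- Radial drift on port tack (`a = −1`), `2π`-periodic in `θ`. -/
noncomputable def mu1minus (v θ : ℝ) : ℝ :=
  if wrapBase θ < 0 then -v
  else if wrapBase θ < 3 * π / 4 then -v * Real.cos (wrapBase θ)
  else if wrapBase θ < 3 * π / 2 then v * Real.sin (wrapBase θ)
  else -v

/-- Angular drift on port tack (`a = −1`), `2π`-periodic in `θ`. -/
noncomputable def mu2minus (v r θ : ℝ) : ℝ :=
  if wrapBase θ < 0 then 0
  else if wrapBase θ < 3 * π / 4 then v * Real.sin (wrapBase θ) / r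
  else if wrapBase θ < 3 * π / 2 then v * Real.cos (wrapBase θ) / r
  else 0

/-- Reduce an angle to the interval `[-3π/4, 5π/4)`. -/
noncomputable def wrapStar (θ : ℝ) : ℝ := toIcoMod Real.two_pi_pos (-(3 * π / 4)) θ

/-- Radial drift of the candidate optimal feedback strategy: starboard for
`θ ∈ [π/4, 5π/4)`, port for `θ ∈ [−3π/4, π/4)`, extended `2π`-periodically. -/
noncomputable def mu1star (v θ : ℝ) : ℝ :=
  if wrapStar θ < π / 4 then mu1minus v (wrapStar θ) else mu1plus v (wrapStar θ)

/-- Angular drift of the candidate optimal feedback strategy: starboard for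
`θ ∈ [π/4, 5π/4)`, port for `θ ∈ [−3π/4, π/4)`, extended `2π`-periodically. -/
noncomputable def mu2star (v r θ : ℝ) : ℝ :=
  if wrapStar θ < π / 4 then mu2minus v r (wrapStar θ) else mu2plus v r (wrapStar θ)

/-- The damping function `φ_n`: `0` on `[0, η − 1/n]`, linear on `(η − 1/n, η)`,
and `1` on `[η, ∞)`. -/
noncomputable def phiDamp (η : ℝ) (n : ℕ) (r : ℝ) : ℝ :=
  if r ≤ η - 1 / n then 0 else if r < η then n * (r - η) + 1 else 1

/-!
Write `δ` for `headingAngle`, so that the feedback drift is `(-v cos δ(θ), v sin δ(θ) / r)`.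
Since `δ` is `deadZone` of the angle reduced mod `π`, `cos ∘ δ` is `1`-Lipschitz (the values
at the two ends of a period agree) and `θ - sin δ(θ)` is nondecreasing (`δ` only jumps down).
The damping `φ_n` is monotone, `n`-Lipschitz and vanishes below `η - 1/n`, so `φ_n(r) / r`
is bounded and Lipschitz. Splitting each difference of products, the terms that could see a
jump have a favourable sign (`φ_n` and `θ - sin δ(θ)` are monotone, `cos δ ≥ 0`), the others
are bounded by Lipschitz constants, and `|Δr| |Δθ| ≤ Δr² + Δθ²` finishes.
-/

open Set
open scoped NNReal

lemma monotone_toIcoDiv {α : Type*} [Field α] [LinearOrder α] [IsStrictOrderedRing α]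
    [FloorRing α] {p : α} (hp : 0 < p) (a : α) : Monotone (toIcoDiv hp a) := by
  intro x y hxy
  rw [toIcoDiv_eq_floor, toIcoDiv_eq_floor]
  gcongr

lemma monotone_sub_toIcoMod {p : ℝ} (hp : 0 < p) (a : ℝ) :
    Monotone fun x => x - toIcoMod hp a x := by
  intro x y hxy
  simp only [self_sub_toIcoMod_eq_mul]
  gcongr
  exact_mod_cast monotone_toIcoDiv hp a hxy

lemma toIcoMod_eq_ite {p : ℝ} (hp : 0 < p) {a w : ℝ} (h₁ : a - p ≤ w) (h₂ : w < a + 2 * p) :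
    toIcoMod hp a w = if w < a then w + p else if w < a + p then w else w - p := by
  split_ifs with h h'
  · rw [← toIcoMod_add_right, toIcoMod_eq_self]; constructor <;> linarith
  · rw [toIcoMod_eq_self]; constructor <;> linarith
  · rw [← toIcoMod_sub, toIcoMod_eq_self]; constructor <;> linarith

lemma toIcoMod_toIcoMod_two_mul {p : ℝ} (hp : 0 < p) (hp' : 0 < 2 * p) (a x : ℝ) :
    toIcoMod hp a (toIcoMod hp' a x) = toIcoMod hp a x := by
  rw [toIcoMod_eq_toIcoMod]
  refine ⟨2 * toIcoDiv hp' a x, ?_⟩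
  rw [self_sub_toIcoMod, zsmul_eq_mul, zsmul_eq_mul]
  push_cast; ring

lemma lipschitzWith_comp_toIcoMod {F : ℝ → ℝ} {K : ℝ≥0} {p : ℝ} (hp : 0 < p) {a : ℝ}
    (hF : LipschitzOnWith K F (Icc a (a + p))) (hper : F a = F (a + p)) :
    LipschitzWith K fun x => F (toIcoMod hp a x) := by
  refine LipschitzWith.of_dist_le_mul fun x y => ?_
  wlog hyx : y ≤ x generalizing x y
  · rw [dist_comm, dist_comm x]
    exact this y x (le_of_not_ge hyx)
  have mem : ∀ z, toIcoMod hp a z ∈ Icc a (a + p) := fun z =>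
    Ico_subset_Icc_self (toIcoMod_mem_Ico hp a z)
  have hx := self_sub_toIcoMod_eq_mul hp a x
  have hy := self_sub_toIcoMod_eq_mul hp a y
  rw [Real.dist_eq x y, abs_of_nonneg (sub_nonneg.2 hyx)]
  rcases (monotone_toIcoDiv hp a hyx).eq_or_lt with heq | hlt
  · have hsame : toIcoMod hp a x - toIcoMod hp a y = x - y := by
      rw [heq] at hy; linarith
    calc dist (F (toIcoMod hp a x)) (F (toIcoMod hp a y))
        ≤ K * dist (toIcoMod hp a x) (toIcoMod hp a y) := hF.dist_le_mul _ (mem x) _ (mem y)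
      _ = K * (x - y) := by rw [Real.dist_eq, hsame, abs_of_nonneg (sub_nonneg.2 hyx)]
  · have hk : (toIcoDiv hp a y : ℝ) + 1 ≤ toIcoDiv hp a x := by exact_mod_cast hlt
    have hgap : toIcoMod hp a x - a + (a + p - toIcoMod hp a y) ≤ x - y := by nlinarith
    calc dist (F (toIcoMod hp a x)) (F (toIcoMod hp a y))
        ≤ dist (F (toIcoMod hp a x)) (F a) + dist (F (a + p)) (F (toIcoMod hp a y)) := by
          rw [hper]; exact dist_triangle _ _ _
      _ ≤ K * dist (toIcoMod hp a x) a + K * dist (a + p) (toIcoMod hp a y) :=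
          add_le_add (hF.dist_le_mul _ (mem x) _ (left_mem_Icc.2 (by linarith)))
            (hF.dist_le_mul _ (right_mem_Icc.2 (by linarith)) _ (mem y))
      _ ≤ K * (x - y) := by
        rw [Real.dist_eq, Real.dist_eq, abs_of_nonneg (by linarith [(mem x).1]),
          abs_of_nonneg (by linarith [(mem y).2]), ← mul_add]
        exact mul_le_mul_of_nonneg_left hgap K.2

lemma monotone_sub_comp {f g : ℝ → ℝ} {s : Set ℝ} (hfs : ∀ x, f x ∈ s) (hg : MonotoneOn g s)
    (hg' : MonotoneOn (fun u => u - g u) s) (hf : Monotone fun x => x - f x) :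
    Monotone fun x => x - g (f x) := by
  intro y x hyx
  rcases le_total (f y) (f x) with h | h
  · linarith [hg' (hfs y) (hfs x) h, hf hyx]
  · linarith [hg (hfs x) (hfs y) h]

lemma lipschitzWith_one_of_monotone {f : ℝ → ℝ} (hf : Monotone f)
    (hf' : Monotone fun x => x - f x) : LipschitzWith 1 f := by
  refine LipschitzWith.of_le_add fun x y => ?_
  rw [Real.dist_eq]
  rcases le_total x y with h | h
  · linarith [hf h, abs_nonneg (x - y)]
  · linarith [hf' h, le_abs_self (x - y)]

lemma monotone_sub_of_lipschitzWith_one {f : ℝ → ℝ} (hf : LipschitzWith 1 f) :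
    Monotone fun x => x - f x := by
  intro y x hyx
  have := (hf.dist_le_mul x y)
  rw [Real.dist_eq, Real.dist_eq, NNReal.coe_one, one_mul, abs_of_nonneg (sub_nonneg.2 hyx)] at this
  linarith [le_abs_self (f x - f y)]

noncomputable def deadZone (a b u : ℝ) : ℝ := u - max a (min u b)

lemma monotone_deadZone (a b : ℝ) : Monotone (deadZone a b) := by
  intro x y hxy
  simp only [deadZone, max_def, min_def]
  split_ifs <;> linarith

lemma monotone_sub_deadZone (a b : ℝ) : Monotone fun u => u - deadZone a b u := by
  intro x y hxy
  simp only [deadZone, sub_sub_cancel]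
  gcongr

lemma deadZone_eq_ite {a b : ℝ} (hab : a ≤ b) (u : ℝ) :
    deadZone a b u = if u < a then u - a else if u < b then 0 else u - b := by
  simp only [deadZone, max_def, min_def]
  split_ifs <;> linarith

lemma apply_div_eq_apply_max_div_max {f : ℝ → ℝ} {b : ℝ} (hf0 : ∀ r ≤ b, f r = 0) (r : ℝ) :
    f r / r = f (max b r) / max b r := by
  rcases le_total r b with h | h
  · rw [hf0 r h, max_eq_left h, hf0 b le_rfl, zero_div, zero_div]
  · rw [max_eq_right h]

lemma apply_div_mem_Icc {f : ℝ → ℝ} {b : ℝ} (hb : 0 < b) (hf : ∀ r, f r ∈ Icc 0 1)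
    (hf0 : ∀ r ≤ b, f r = 0) (r : ℝ) : f r / r ∈ Icc 0 (1 / b) := by
  rw [apply_div_eq_apply_max_div_max hf0]
  have hX : b ≤ max b r := le_max_left b r
  have hX0 : 0 < max b r := hb.trans_le hX
  exact ⟨div_nonneg (hf _).1 hX0.le,
    (div_le_div_of_nonneg_right (hf _).2 hX0.le).trans (one_div_le_one_div_of_le hb hX)⟩

lemma abs_apply_div_sub_apply_div_le {f : ℝ → ℝ} {K : ℝ≥0} {b : ℝ} (hb : 0 < b)
    (hf : LipschitzWith K f) (hf1 : ∀ r, |f r| ≤ 1) (hf0 : ∀ r ≤ b, f r = 0) (x y : ℝ) :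
    |f x / x - f y / y| ≤ (K / b + 1 / b ^ 2) * |x - y| := by
  rw [apply_div_eq_apply_max_div_max hf0 x, apply_div_eq_apply_max_div_max hf0 y]
  set X := max b x
  set Y := max b y
  have hX : b ≤ X := le_max_left b x
  have hY : b ≤ Y := le_max_left b y
  have hX0 : 0 < X := hb.trans_le hX
  have hY0 : 0 < Y := hb.trans_le hY
  have hXY : |X - Y| ≤ |x - y| := by
    simpa only [X, Y, max_comm b] using abs_max_sub_max_le_abs x y b
  have hfXY : |f X - f Y| ≤ K * |X - Y| := by simpa [Real.dist_eq] using hf.dist_le_mul X Y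
  have hXY0 : b ^ 2 ≤ X * Y := by nlinarith
  have split : f X / X - f Y / Y = (f X - f Y) / X + f Y * (Y - X) / (X * Y) := by
    field_simp
    ring
  calc |f X / X - f Y / Y| ≤ |f X - f Y| / X + |f Y| * |X - Y| / (X * Y) := by
        rw [split]
        refine (abs_add_le _ _).trans (le_of_eq ?_)
        rw [abs_div, abs_div, abs_mul, abs_sub_comm Y, abs_of_pos hX0,
          abs_of_pos (mul_pos hX0 hY0)]
    _ ≤ K * |X - Y| / b + |X - Y| / b ^ 2 := by
        gcongr ?_ + ?_
        · exact div_le_div₀ (by positivity) hfXY hb hX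
        · exact div_le_div₀ (abs_nonneg _) (mul_le_of_le_one_left (abs_nonneg _) (hf1 Y))
            (by positivity) hXY0
    _ = (K / b + 1 / b ^ 2) * |X - Y| := by ring
    _ ≤ (K / b + 1 / b ^ 2) * |x - y| := by gcongr

lemma radial_term_le {φ c : ℝ → ℝ} {v : ℝ} (hv : 0 ≤ v) (hφ : Monotone φ)
    (hφ1 : ∀ r, |φ r| ≤ 1) (hc0 : ∀ θ, 0 ≤ c θ) (hc : LipschitzWith 1 c) (r₁ r₂ θ₁ θ₂ : ℝ) :
    (r₁ - r₂) * (φ r₁ * -(v * c θ₁) - φ r₂ * -(v * c θ₂))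
      ≤ v * (|r₁ - r₂| * |θ₁ - θ₂|) := by
  have hmono : 0 ≤ (φ r₁ - φ r₂) * (r₁ - r₂) :=
    (monovary_id_iff.2 hφ).sub_mul_sub_nonneg r₂ r₁
  have hlip : |c θ₁ - c θ₂| ≤ |θ₁ - θ₂| := by
    simpa [Real.dist_eq] using hc.dist_le_mul θ₁ θ₂
  have hcross : -(φ r₂ * ((r₁ - r₂) * (c θ₁ - c θ₂))) ≤ |r₁ - r₂| * |θ₁ - θ₂| := by
    refine (neg_le_abs _).trans ?_
    rw [abs_mul, abs_mul]
    calc |φ r₂| * (|r₁ - r₂| * |c θ₁ - c θ₂|) ≤ 1 * (|r₁ - r₂| * |θ₁ - θ₂|) := by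
          gcongr; exact hφ1 r₂
      _ = |r₁ - r₂| * |θ₁ - θ₂| := one_mul _
  calc (r₁ - r₂) * (φ r₁ * -(v * c θ₁) - φ r₂ * -(v * c θ₂))
      = -(v * c θ₁) * ((φ r₁ - φ r₂) * (r₁ - r₂))
        + v * -(φ r₂ * ((r₁ - r₂) * (c θ₁ - c θ₂))) := by ring
    _ ≤ 0 + v * (|r₁ - r₂| * |θ₁ - θ₂|) := by
        gcongr
        · exact mul_nonpos_of_nonpos_of_nonneg (neg_nonpos.2 (mul_nonneg hv (hc0 θ₁))) hmono
    _ = v * (|r₁ - r₂| * |θ₁ - θ₂|) := zero_add _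

lemma angular_term_le {h s : ℝ → ℝ} {v B L : ℝ} (hv : 0 ≤ v) (hh : ∀ r, h r ∈ Icc 0 B)
    (hhL : ∀ x y, |h x - h y| ≤ L * |x - y|) (hs1 : ∀ θ, |s θ| ≤ 1)
    (hs : Monotone fun θ => θ - s θ) (r₁ r₂ θ₁ θ₂ : ℝ) :
    (θ₁ - θ₂) * (h r₁ * (v * s θ₁) - h r₂ * (v * s θ₂))
      ≤ v * (B * (θ₁ - θ₂) ^ 2 + L * (|r₁ - r₂| * |θ₁ - θ₂|)) := by
  have hmono : 0 ≤ ((θ₁ - s θ₁) - (θ₂ - s θ₂)) * (θ₁ - θ₂) :=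
    (monovary_id_iff.2 hs).sub_mul_sub_nonneg θ₂ θ₁
  have hos : (θ₁ - θ₂) * (s θ₁ - s θ₂) ≤ (θ₁ - θ₂) ^ 2 := by nlinarith
  have hdiag : h r₁ * ((θ₁ - θ₂) * (s θ₁ - s θ₂)) ≤ B * (θ₁ - θ₂) ^ 2 :=
    (mul_le_mul_of_nonneg_left hos (hh r₁).1).trans
      (mul_le_mul_of_nonneg_right (hh r₁).2 (sq_nonneg _))
  have hcross : s θ₂ * ((θ₁ - θ₂) * (h r₁ - h r₂)) ≤ L * (|r₁ - r₂| * |θ₁ - θ₂|) := by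
    refine (le_abs_self _).trans ?_
    rw [abs_mul, abs_mul]
    calc |s θ₂| * (|θ₁ - θ₂| * |h r₁ - h r₂|) ≤ 1 * (|θ₁ - θ₂| * (L * |r₁ - r₂|)) := by
          gcongr
          exacts [hs1 θ₂, hhL r₁ r₂]
      _ = L * (|r₁ - r₂| * |θ₁ - θ₂|) := by ring
  calc (θ₁ - θ₂) * (h r₁ * (v * s θ₁) - h r₂ * (v * s θ₂))
      = v * (h r₁ * ((θ₁ - θ₂) * (s θ₁ - s θ₂)) + s θ₂ * ((θ₁ - θ₂) * (h r₁ - h r₂))) := by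
        ring
    _ ≤ v * (B * (θ₁ - θ₂) ^ 2 + L * (|r₁ - r₂| * |θ₁ - θ₂|)) := by gcongr

lemma damped_drift_one_sided {φ c s : ℝ → ℝ} {K : ℝ≥0} {v b : ℝ} (hv : 0 ≤ v) (hb : 0 < b)
    (hφ : Monotone φ) (hφK : LipschitzWith K φ) (hφ01 : ∀ r, φ r ∈ Icc 0 1)
    (hφ0 : ∀ r ≤ b, φ r = 0) (hc0 : ∀ θ, 0 ≤ c θ) (hc : LipschitzWith 1 c)
    (hs1 : ∀ θ, |s θ| ≤ 1) (hs : Monotone fun θ => θ - s θ) (r₁ r₂ θ₁ θ₂ : ℝ) :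
    (r₁ - r₂) * (φ r₁ * -(v * c θ₁) - φ r₂ * -(v * c θ₂))
        + (θ₁ - θ₂) * (φ r₁ * (v * s θ₁ / r₁) - φ r₂ * (v * s θ₂ / r₂))
      ≤ v * (1 + 1 / b + (K / b + 1 / b ^ 2)) * ((r₁ - r₂) ^ 2 + (θ₁ - θ₂) ^ 2) := by
  have hφ1 : ∀ r, |φ r| ≤ 1 := fun r => abs_le.2 ⟨by linarith [(hφ01 r).1], (hφ01 r).2⟩
  have radial := radial_term_le hv hφ hφ1 hc0 hc r₁ r₂ θ₁ θ₂
  have angular := angular_term_le hv (apply_div_mem_Icc hb hφ01 hφ0)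
    (abs_apply_div_sub_apply_div_le hb hφK hφ1 hφ0) hs1 hs r₁ r₂ θ₁ θ₂
  have hamgm : |r₁ - r₂| * |θ₁ - θ₂| ≤ (r₁ - r₂) ^ 2 + (θ₁ - θ₂) ^ 2 := by
    nlinarith [two_mul_le_add_sq |r₁ - r₂| |θ₁ - θ₂|, sq_abs (r₁ - r₂), sq_abs (θ₁ - θ₂),
      abs_nonneg (r₁ - r₂), abs_nonneg (θ₁ - θ₂)]
  have hsq : (θ₁ - θ₂) ^ 2 ≤ (r₁ - r₂) ^ 2 + (θ₁ - θ₂) ^ 2 := le_add_of_nonneg_left (sq_nonneg _)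
  have hφs : ∀ r θ, φ r * (v * s θ / r) = φ r / r * (v * s θ) := fun r θ => by ring
  rw [hφs, hφs]
  calc _ ≤ v * (|r₁ - r₂| * |θ₁ - θ₂|)
        + v * (1 / b * (θ₁ - θ₂) ^ 2 + (K / b + 1 / b ^ 2) * (|r₁ - r₂| * |θ₁ - θ₂|)) :=
        add_le_add radial angular
    _ ≤ v * ((r₁ - r₂) ^ 2 + (θ₁ - θ₂) ^ 2) + v * (1 / b * ((r₁ - r₂) ^ 2 + (θ₁ - θ₂) ^ 2)
        + (K / b + 1 / b ^ 2) * ((r₁ - r₂) ^ 2 + (θ₁ - θ₂) ^ 2)) := by gcongr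
    _ = _ := by ring

/-- The angle of the feedback drift from the inward radial direction: a `π`-periodic sawtooth
with downward jumps at `π/4 + πℤ`. -/
noncomputable def headingAngle (θ : ℝ) : ℝ :=
  deadZone (-(π / 2)) 0 (toIcoMod Real.pi_pos (-(3 * π / 4)) θ)

lemma wrapStar_mem (θ : ℝ) : wrapStar θ ∈ Ico (-(3 * π / 4)) (5 * π / 4) := by
  have h : wrapStar θ ∈ Ico (-(3 * π / 4)) (-(3 * π / 4) + 2 * π) := toIcoMod_mem_Ico _ _ _
  exact ⟨h.1, by linarith [h.2]⟩

lemma headingAngle_eq_wrapStar (θ : ℝ) : headingAngle θ =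
    deadZone (-(π / 2)) 0 (if wrapStar θ < π / 4 then wrapStar θ else wrapStar θ - π) := by
  have hw := wrapStar_mem θ
  have hπ := Real.pi_pos
  rw [headingAngle, ← toIcoMod_toIcoMod_two_mul Real.pi_pos two_pi_pos]
  change deadZone _ _ (toIcoMod Real.pi_pos _ (wrapStar θ)) = _
  rw [toIcoMod_eq_ite Real.pi_pos (by linarith [hw.1]) (by linarith [hw.2]), if_neg (not_lt.2 hw.1)]
  ring_nf

lemma wrapBase_wrapStar (θ : ℝ) : wrapBase (wrapStar θ) =
    if wrapStar θ < -(π / 4) then wrapStar θ + 2 * π else wrapStar θ := by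
  have hw := wrapStar_mem θ
  have hπ := Real.pi_pos
  rw [wrapBase, toIcoMod_eq_ite two_pi_pos (by linarith [hw.1]) (by linarith [hw.2])]
  split_ifs <;> first | rfl | (exfalso; linarith [hw.2])

lemma mu1star_eq (v θ : ℝ) : mu1star v θ = -(v * cos (headingAngle θ)) := by
  have hw := wrapStar_mem θ
  have hπ := Real.pi_pos
  rw [headingAngle_eq_wrapStar, deadZone_eq_ite (by linarith), mu1star, mu1minus, mu1plus,
    wrapBase_wrapStar]
  generalize wrapStar θ = w at *
  split_ifs <;> first
    | (exfalso; linarith [hw.1, hw.2])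
    | (simp only [sub_neg_eq_add, sub_zero, cos_add_pi_div_two, cos_sub_pi, sin_sub_pi,
        sin_add_two_pi, cos_zero]; ring)

lemma mu2star_eq (v r θ : ℝ) : mu2star v r θ = v * sin (headingAngle θ) / r := by
  have hw := wrapStar_mem θ
  have hπ := Real.pi_pos
  rw [headingAngle_eq_wrapStar, deadZone_eq_ite (by linarith), mu2star, mu2minus, mu2plus,
    wrapBase_wrapStar]
  generalize wrapStar θ = w at *
  split_ifs <;> first
    | (exfalso; linarith [hw.1, hw.2])
    | (simp only [sub_neg_eq_add, sub_zero, sin_add_pi_div_two, sin_sub_pi, cos_sub_pi,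
        cos_add_two_pi, sin_zero] <;> ring)

lemma headingAngle_mem (θ : ℝ) : headingAngle θ ∈ Icc (-(π / 2)) (π / 2) := by
  have hu := toIcoMod_mem_Ico Real.pi_pos (-(3 * π / 4)) θ
  have hπ := Real.pi_pos
  rw [headingAngle, deadZone_eq_ite (by linarith)]
  split_ifs <;> constructor <;> linarith [hu.1, hu.2]

lemma monotone_sub_sin_headingAngle : Monotone fun θ => θ - sin (headingAngle θ) := by
  have hδ : Monotone fun θ => θ - headingAngle θ :=
    monotone_sub_comp (g := deadZone _ _) (fun _ => mem_univ _)
      ((monotone_deadZone _ _).monotoneOn _) ((monotone_sub_deadZone _ _).monotoneOn _)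
      (monotone_sub_toIcoMod Real.pi_pos _)
  exact monotone_sub_comp headingAngle_mem strictMonoOn_sin.monotoneOn
    ((monotone_sub_of_lipschitzWith_one lipschitzWith_sin).monotoneOn _) hδ

lemma lipschitzWith_cos_headingAngle : LipschitzWith 1 fun θ => cos (headingAngle θ) := by
  have hF : LipschitzWith 1 (cos ∘ deadZone (-(π / 2)) 0) := by
    simpa using lipschitzWith_cos.comp
      (lipschitzWith_one_of_monotone (monotone_deadZone _ _) (monotone_sub_deadZone _ _))
  refine lipschitzWith_comp_toIcoMod Real.pi_pos hF.lipschitzOnWith ?_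
  have hπ := Real.pi_pos
  rw [Function.comp_apply, Function.comp_apply, deadZone_eq_ite (by linarith),
    deadZone_eq_ite (by linarith), if_pos (by linarith), if_neg (by linarith),
    if_neg (by linarith), ← cos_neg]
  congr 1
  ring

lemma phiDamp_eq_max_min {η : ℝ} {n : ℕ} (hn : 0 < n) (r : ℝ) :
    phiDamp η n r = max 0 (min 1 (n * (r - η) + 1)) := by
  have hn' : (0 : ℝ) < n := by exact_mod_cast hn
  have hinv : (n : ℝ) * (1 / n) = 1 := by field_simp
  unfold phiDamp
  split_ifs with h1 h2
  · rw [min_eq_right (by nlinarith), max_eq_left (by nlinarith)]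
  · rw [min_eq_right (by nlinarith), max_eq_right (by nlinarith)]
  · rw [min_eq_left (by nlinarith), max_eq_right zero_le_one]

lemma phiDamp_of_le {η r : ℝ} {n : ℕ} (h : r ≤ η - 1 / n) : phiDamp η n r = 0 := by
  rw [phiDamp, if_pos h]

lemma phiDamp_mem_Icc {η : ℝ} {n : ℕ} (hn : 0 < n) (r : ℝ) : phiDamp η n r ∈ Icc 0 1 := by
  rw [phiDamp_eq_max_min hn]
  exact ⟨le_max_left _ _, max_le zero_le_one (min_le_left _ _)⟩

lemma monotone_phiDamp {η : ℝ} {n : ℕ} (hn : 0 < n) : Monotone (phiDamp η n) := by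
  intro x y hxy
  simp only [phiDamp_eq_max_min hn]
  gcongr

lemma lipschitzWith_phiDamp {η : ℝ} {n : ℕ} (hn : 0 < n) : LipschitzWith n (phiDamp η n) := by
  have hlin : LipschitzWith n fun r : ℝ => n * (r - η) + 1 := by
    refine LipschitzWith.of_dist_le_mul fun x y => ?_
    rw [Real.dist_eq, Real.dist_eq,
      show n * (x - η) + 1 - (n * (y - η) + 1) = n * (x - y) by ring, abs_mul, Nat.abs_cast]
    rfl
  rw [show phiDamp η n = _ from funext (phiDamp_eq_max_min hn)]
  exact (hlin.const_min 1).const_max 0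

theorem damped_drift_monotonicity_general
    (v η : ℝ) (hv : 0 < v) (n : ℕ) (hn : 0 < n) (hnη : 1 / (n : ℝ) < η) :
    ∃ C : ℝ, 0 ≤ C ∧ ∀ r₁ r₂ θ₁ θ₂ : ℝ, 0 < r₁ → 0 < r₂ →
      (r₁ - r₂) * (phiDamp η n r₁ * mu1star v θ₁ - phiDamp η n r₂ * mu1star v θ₂)
        + (θ₁ - θ₂) * (phiDamp η n r₁ * mu2star v r₁ θ₁ - phiDamp η n r₂ * mu2star v r₂ θ₂)
      ≤ C * ((r₁ - r₂) ^ 2 + (θ₁ - θ₂) ^ 2) := by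
  have hb : 0 < η - 1 / n := sub_pos.2 hnη
  refine ⟨v * (1 + 1 / (η - 1 / n) + (n / (η - 1 / n) + 1 / (η - 1 / n) ^ 2)), by positivity,
    fun r₁ r₂ θ₁ θ₂ _ _ => ?_⟩
  simp only [mu1star_eq, mu2star_eq]
  exact_mod_cast damped_drift_one_sided hv.le hb (monotone_phiDamp hn) (lipschitzWith_phiDamp hn)
    (phiDamp_mem_Icc hn) (fun _ => phiDamp_of_le)
    (fun θ => cos_nonneg_of_mem_Icc (headingAngle_mem θ))
    lipschitzWith_cos_headingAngle (fun θ => abs_sin_le_one _) monotone_sub_sin_headingAngle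
    r₁ r₂ θ₁ θ₂

/-- **One-sided (monotonicity-type) estimate for the damped feedback drift.**
There is a constant `C ≥ 0` such that the damped drift vector field
`(φ_n·μ₁*, φ_n·μ₂*)` satisfies the one-sided Lipschitz inequality needed for the
Yamada–Watanabe pathwise-uniqueness argument. -/
theorem damped_drift_monotonicity
    (v η : ℝ) (hv : 0 < v) (hη : 0 < η) (n : ℕ) (hn : 0 < n) (hnη : 1 / (n : ℝ) < η) :
    ∃ C : ℝ, 0 ≤ C ∧ ∀ r₁ r₂ θ₁ θ₂ : ℝ, 0 < r₁ → 0 < r₂ →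
      (r₁ - r₂) * (phiDamp η n r₁ * mu1star v θ₁ - phiDamp η n r₂ * mu1star v θ₂)
        + (θ₁ - θ₂) * (phiDamp η n r₁ * mu2star v r₁ θ₁ - phiDamp η n r₂ * mu2star v r₂ θ₂)
      ≤ C * ((r₁ - r₂) ^ 2 + (θ₁ - θ₂) ^ 2) :=
  damped_drift_monotonicity_general v η hv n hn hnη
end

section
/- Let v > 0 and let μ₁* be defined as in the context. Then −v ≤ μ₁*(θ) ≤ −v/√2 for every θ ∈ ℝ. Consequently, if η ≥ 0, r > η, Θ : [0,∞) → ℝ is measurable, and R_t = r + ∫₀^t μ₁*(Θ_s) ds for t ≥ 0, then any time T ≥ 0 with R_T = η satisfies T ≤ √2·(r − η)/v. -/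
open Real

/-!
On every arc of the feedback law the radial drift is either `-v` or `-v cos φ` for an angle `φ`
within `π / 4` of `0` (the sines and the shifted cosines are rewritten in this form), so it lies
in `[-v, -v / √2]`. The distance to the origin therefore decreases at rate at least `v / √2`,
and it cannot fall from `r` to `η` in more than `√2 (r - η) / v` time.
-/

open MeasureTheory Set

theorem measurable_toIcoMod {p : ℝ} (hp : 0 < p) (a : ℝ) : Measurable (toIcoMod hp a) := by
  have h : toIcoMod hp a = fun x => x - (⌊(x - a) / p⌋ : ℝ) * p := by
    funext x
    rw [toIcoMod, toIcoDiv_eq_floor, zsmul_eq_mul]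
  rw [h]
  fun_prop

theorem toIcoMod_mem_Ico_iff_of_subset {p : ℝ} (hp : 0 < p) {a b c d : ℝ}
    (ha : Ico c d ⊆ Ico a (a + p)) (hb : Ico c d ⊆ Ico b (b + p)) (x : ℝ) :
    toIcoMod hp a x ∈ Ico c d ↔ toIcoMod hp b x ∈ Ico c d := by
  constructor <;> intro h
  · rwa [← toIcoMod_toIcoMod hp b a x, (toIcoMod_eq_self hp).2 (hb h)]
  · rwa [← toIcoMod_toIcoMod hp a b x, (toIcoMod_eq_self hp).2 (ha h)]

theorem Measurable.intervalIntegrable_of_abs_le {f : ℝ → ℝ} (hf : Measurable f) {C : ℝ}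
    (hC : ∀ x, |f x| ≤ C) (a b : ℝ) : IntervalIntegrable f volume a b :=
  intervalIntegrable_const.mono_fun' hf.aestronglyMeasurable (.of_forall hC)

theorem le_div_of_add_intervalIntegral_eq {f : ℝ → ℝ} {c r η T : ℝ} (hc : 0 < c) (hT : 0 ≤ T)
    (hf : IntervalIntegrable f volume 0 T) (hfc : ∀ s, f s ≤ -c)
    (hη : r + ∫ s in (0 : ℝ)..T, f s = η) : T ≤ (r - η) / c := by
  have hint : ∫ s in (0 : ℝ)..T, f s ≤ T * -c := by
    simpa using intervalIntegral.integral_mono_on hT hf intervalIntegrable_const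
      (fun s _ => hfc s)
  rw [le_div_iff₀ hc]
  linarith

namespace Real

theorem sqrt_two_div_two_le_cos {x : ℝ} (hx : |x| ≤ π / 4) : √2 / 2 ≤ cos x := by
  rw [← cos_abs, ← cos_pi_div_four]
  exact cos_le_cos_of_nonneg_of_le_pi (abs_nonneg x) (by linarith [pi_pos]) hx

end Real

section Drift

variable {v : ℝ}

theorem neg_mem_Icc_neg_div_sqrt_two (hv : 0 ≤ v) : -v ∈ Icc (-v) (-(v / √2)) :=
  ⟨le_rfl, neg_le_neg (div_le_self hv one_lt_sqrt_two.le)⟩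

theorem neg_mul_cos_mem_Icc {x : ℝ} (hv : 0 ≤ v) (hx : |x| ≤ π / 4) :
    -v * cos x ∈ Icc (-v) (-(v / √2)) := by
  have hcos := sqrt_two_div_two_le_cos hx
  have hdiv : v / √2 = v * (√2 / 2) := by
    field_simp
    simp
  rw [hdiv]
  constructor <;> nlinarith [cos_le_one x]

theorem mu1plus_mem_Icc {θ : ℝ} (hv : 0 ≤ v) (hθ : wrapBase θ ∈ Ico (π / 4) (5 * π / 4)) :
    mu1plus v θ ∈ Icc (-v) (-(v / √2)) := by
  obtain ⟨hlo, hhi⟩ := hθ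
  unfold mu1plus
  split_ifs with h₁ h₂
  · rw [← cos_sub_pi_div_two]
    exact neg_mul_cos_mem_Icc hv (abs_le.2 ⟨by linarith, by linarith⟩)
  · exact neg_mem_Icc_neg_div_sqrt_two hv
  · rw [← neg_neg (cos _), ← cos_sub_pi, mul_neg, ← neg_mul]
    exact neg_mul_cos_mem_Icc hv (abs_le.2 ⟨by linarith, by linarith⟩)

theorem mu1minus_mem_Icc {θ : ℝ} (hv : 0 ≤ v) (hθ : wrapBase θ ∉ Ico (π / 4) (5 * π / 4)) :
    mu1minus v θ ∈ Icc (-v) (-(v / √2)) := by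
  obtain ⟨hlo, hhi⟩ : wrapBase θ ∈ Ico (-(π / 4)) (-(π / 4) + 2 * π) := toIcoMod_mem_Ico _ _ _
  simp only [mem_Ico, not_and_or, not_le, not_lt] at hθ
  unfold mu1minus
  split_ifs with h₁ h₂ h₃
  · exact neg_mem_Icc_neg_div_sqrt_two hv
  · exact neg_mul_cos_mem_Icc hv (abs_le.2 ⟨by linarith, by rcases hθ with h | h <;> linarith⟩)
  · have hsin : sin (wrapBase θ) = -cos (wrapBase θ - 3 * π / 2) := by
      rw [show wrapBase θ - 3 * π / 2 = wrapBase θ - π / 2 - π by ring, cos_sub_pi,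
        cos_sub_pi_div_two, neg_neg]
    rw [hsin, mul_neg, ← neg_mul]
    exact neg_mul_cos_mem_Icc hv (abs_le.2 ⟨by rcases hθ with h | h <;> linarith, by linarith⟩)
  · exact neg_mem_Icc_neg_div_sqrt_two hv

theorem mu1star_eq_ite (θ : ℝ) : mu1star v θ =
    if wrapBase θ ∈ Ico (π / 4) (5 * π / 4) then mu1plus v θ else mu1minus v θ := by
  have hpi := pi_pos
  have hswitch : wrapStar θ < π / 4 ↔ wrapBase θ ∉ Ico (π / 4) (5 * π / 4) := by
    have hhi : wrapStar θ < 5 * π / 4 := by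
      have := (toIcoMod_mem_Ico two_pi_pos (-(3 * π / 4)) θ).2
      unfold wrapStar
      linarith
    have hmem : wrapBase θ ∈ Ico (π / 4) (5 * π / 4) ↔ wrapStar θ ∈ Ico (π / 4) (5 * π / 4) :=
      toIcoMod_mem_Ico_iff_of_subset two_pi_pos
        (Ico_subset_Ico (by linarith) (by linarith)) (Ico_subset_Ico (by linarith) (by linarith)) θ
    rw [hmem, mem_Ico]
    grind
  have hperiodic : wrapBase (wrapStar θ) = wrapBase θ := toIcoMod_toIcoMod _ _ _ _
  simp only [mu1star, mu1plus, mu1minus, hperiodic, hswitch, ite_not]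

theorem mu1star_mem_Icc (hv : 0 ≤ v) (θ : ℝ) : mu1star v θ ∈ Icc (-v) (-(v / √2)) := by
  rw [mu1star_eq_ite]
  split_ifs with h
  exacts [mu1plus_mem_Icc hv h, mu1minus_mem_Icc hv h]

theorem measurable_mu1star (v : ℝ) : Measurable (mu1star v) := by
  have hb : Measurable wrapBase := measurable_toIcoMod _ _
  have hs : Measurable wrapStar := measurable_toIcoMod _ _
  have hplus : Measurable (mu1plus v) :=
    .ite (hb measurableSet_Iio) (by fun_prop) <|
      .ite (hb measurableSet_Iio) (by fun_prop) (by fun_prop)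
  have hminus : Measurable (mu1minus v) :=
    .ite (hb measurableSet_Iio) measurable_const <| .ite (hb measurableSet_Iio) (by fun_prop) <|
      .ite (hb measurableSet_Iio) (by fun_prop) measurable_const
  exact .ite (hs measurableSet_Iio) (hminus.comp hs) (hplus.comp hs)

end Drift

/-- **Radial drift bound and travel-time bound for the candidate optimal strategy.**
The feedback radial drift satisfies `−v ≤ μ₁*(θ) ≤ −v/√2` for every `θ`, and
consequently a boat whose distance to the origin evolves with radial speed
`μ₁*(Θ_t)` reaches the circle of radius `η` from distance `r > η` within time
`√2·(r − η)/v`. -/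
theorem mu1star_bounds_and_travel_time
    (v : ℝ) (hv : 0 < v) :
    (∀ θ : ℝ, mu1star v θ ∈ Set.Icc (-v) (-(v / Real.sqrt 2))) ∧
    ∀ (η r : ℝ) (Θ R : ℝ → ℝ) (T : ℝ),
      0 ≤ η → η < r → Measurable Θ →
      (∀ t : ℝ, 0 ≤ t → R t = r + ∫ s in (0:ℝ)..t, mu1star v (Θ s)) →
      0 ≤ T → R T = η → T ≤ Real.sqrt 2 * (r - η) / v := by
  refine ⟨mu1star_mem_Icc hv.le, fun η r Θ R T _ _ hΘ hR hT hRT => ?_⟩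
  have habs (θ : ℝ) : |mu1star v θ| ≤ v := by
    have := mu1star_mem_Icc hv.le θ
    exact abs_le.2 ⟨this.1, this.2.trans (by linarith [div_nonneg hv.le (sqrt_nonneg 2)])⟩
  have hint :=
    ((measurable_mu1star v).comp hΘ).intervalIntegrable_of_abs_le (fun s => habs (Θ s)) 0 T
  have := le_div_of_add_intervalIntegral_eq (div_pos hv (sqrt_pos.2 two_pos)) hT hint
    (fun s => (mu1star_mem_Icc hv.le (Θ s)).2) ((hR T hT).symm.trans hRT)
  rwa [div_div_eq_mul_div, mul_comm] at this
end

section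
/- Let v > 0 and let μ₁* and μ₂* be defined as in the context. Then for every θ ∈ ℝ and every r > 0: μ₁*(θ + π) = μ₁*(θ) and μ₂*(r, θ + π) = μ₂*(r, θ); that is, μ₁* and μ₂*(r, ·) are π-periodic. -/
/-! The feedback law uses port tack on `[-3π/4, π/4)` and starboard tack on `[π/4, 5π/4)`,
two windows that differ by a shift of `π`. The two tacks are mirror images of each other under
this shift: for `x ∈ [-3π/4, π/4)` the port drifts at `x` coincide with the starboard drifts at
`x + π`, piece by piece, by `sin (x + π) = -sin x` and `cos (x + π) = -cos x`. Shifting `θ` by `π`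
therefore swaps the two windows and leaves the feedback drifts unchanged. -/

open Real

section toIcoMod

variable {α : Type*} [AddCommGroup α] [LinearOrder α] [IsOrderedAddMonoid α] [Archimedean α]
  {p : α} (hp : 0 < p) {a b c : α}

theorem toIcoMod_add_of_add_mem_Ico (h : toIcoMod hp a b + c ∈ Set.Ico a (a + p)) :
    toIcoMod hp a (b + c) = toIcoMod hp a b + c := by
  rw [← (toIcoMod_eq_self hp).2 h, toIcoMod_eq_toIcoMod]
  exact ⟨-toIcoDiv hp a b, by rw [add_sub_add_right_eq_sub, toIcoMod_sub_self]⟩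

theorem toIcoMod_add_of_add_sub_mem_Ico (h : toIcoMod hp a b + c - p ∈ Set.Ico a (a + p)) :
    toIcoMod hp a (b + c) = toIcoMod hp a b + c - p := by
  rw [add_sub_assoc] at h ⊢
  rw [← toIcoMod_add_of_add_mem_Ico hp h, ← toIcoMod_add_right hp a (b + (c - p)),
    add_assoc, sub_add_cancel]

end toIcoMod

theorem wrapStar_mem_Ico (θ : ℝ) : wrapStar θ ∈ Set.Ico (-(3 * π / 4)) (5 * π / 4) := by
  have h := toIcoMod_mem_Ico two_pi_pos (-(3 * π / 4)) θ
  exact ⟨h.1, by rw [wrapStar]; linarith [h.2]⟩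

theorem wrapStar_add_pi_of_lt {θ : ℝ} (h : wrapStar θ < π / 4) :
    wrapStar (θ + π) = wrapStar θ + π := by
  have hge := (wrapStar_mem_Ico θ).1
  unfold wrapStar at h hge ⊢
  exact toIcoMod_add_of_add_mem_Ico two_pi_pos ⟨by linarith [pi_pos], by linarith⟩

theorem wrapStar_add_pi_of_le {θ : ℝ} (h : π / 4 ≤ wrapStar θ) :
    wrapStar (θ + π) = wrapStar θ - π := by
  have hlt := (wrapStar_mem_Ico θ).2
  unfold wrapStar at h hlt ⊢
  rw [toIcoMod_add_of_add_sub_mem_Ico two_pi_pos ⟨by linarith, by linarith⟩]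
  ring

theorem wrapBase_eq_self {x : ℝ} (h₁ : -(π / 4) ≤ x) (h₂ : x < 7 * π / 4) : wrapBase x = x :=
  (toIcoMod_eq_self two_pi_pos).2 ⟨h₁, by linarith⟩

theorem wrapBase_eq_add_two_pi {x : ℝ} (h₁ : -(9 * π / 4) ≤ x) (h₂ : x < -(π / 4)) :
    wrapBase x = x + 2 * π := by
  rw [wrapBase, ← toIcoMod_add_right]
  exact wrapBase_eq_self (by linarith) (by linarith)

section PortStarboard

variable {v r x : ℝ} (h₁ : -(3 * π / 4) ≤ x) (h₂ : x < π / 4)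
include h₁ h₂

theorem mu1minus_eq_mu1plus_add_pi : mu1minus v x = mu1plus v (x + π) := by
  have hπ := pi_pos
  have hshift := wrapBase_eq_self (x := x + π) (by linarith) (by linarith)
  rcases lt_or_ge x (-(π / 4)) with hx | hx
  · simp only [mu1minus, mu1plus, hshift, wrapBase_eq_add_two_pi (by linarith) hx,
      sin_add_two_pi, sin_add_pi, cos_add_pi]
    split_ifs <;> first | (exfalso; linarith) | ring
  · simp only [mu1minus, mu1plus, hshift, wrapBase_eq_self hx (by linarith), sin_add_pi,
      cos_add_pi]
    split_ifs <;> first | (exfalso; linarith) | ring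

theorem mu2minus_eq_mu2plus_add_pi : mu2minus v r x = mu2plus v r (x + π) := by
  have hπ := pi_pos
  have hshift := wrapBase_eq_self (x := x + π) (by linarith) (by linarith)
  rcases lt_or_ge x (-(π / 4)) with hx | hx
  · simp only [mu2minus, mu2plus, hshift, wrapBase_eq_add_two_pi (by linarith) hx,
      cos_add_two_pi, sin_add_pi, cos_add_pi]
    split_ifs <;> first | (exfalso; linarith) | ring
  · simp only [mu2minus, mu2plus, hshift, wrapBase_eq_self hx (by linarith), sin_add_pi,
      cos_add_pi]
    split_ifs <;> first | (exfalso; linarith) | ring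

end PortStarboard

theorem mu1star_add_pi (v θ : ℝ) : mu1star v (θ + π) = mu1star v θ := by
  obtain ⟨hge, hlt⟩ := wrapStar_mem_Ico θ
  have hπ := pi_pos
  rcases lt_or_ge (wrapStar θ) (π / 4) with h | h
  · rw [mu1star, mu1star, wrapStar_add_pi_of_lt h, if_neg (by linarith), if_pos h]
    exact (mu1minus_eq_mu1plus_add_pi hge h).symm
  · rw [mu1star, mu1star, wrapStar_add_pi_of_le h, if_pos (by linarith), if_neg h.not_gt]
    simpa only [sub_add_cancel] using mu1minus_eq_mu1plus_add_pi (v := v) (x := wrapStar θ - π) (by linarith)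
      (by linarith)

theorem mu2star_add_pi (v r θ : ℝ) : mu2star v r (θ + π) = mu2star v r θ := by
  obtain ⟨hge, hlt⟩ := wrapStar_mem_Ico θ
  have hπ := pi_pos
  rcases lt_or_ge (wrapStar θ) (π / 4) with h | h
  · rw [mu2star, mu2star, wrapStar_add_pi_of_lt h, if_neg (by linarith), if_pos h]
    exact (mu2minus_eq_mu2plus_add_pi hge h).symm
  · rw [mu2star, mu2star, wrapStar_add_pi_of_le h, if_pos (by linarith), if_neg h.not_gt]
    simpa only [sub_add_cancel] using mu2minus_eq_mu2plus_add_pi (v := v) (r := r) (x := wrapStar θ - π)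
      (by linarith) (by linarith)

theorem mustar_pi_periodic_general (v : ℝ) :
    ∀ θ r : ℝ, 0 < r →
      mu1star v (θ + π) = mu1star v θ ∧ mu2star v r (θ + π) = mu2star v r θ :=
  fun θ r _ => ⟨mu1star_add_pi v θ, mu2star_add_pi v r θ⟩

/-- **`π`-periodicity of the feedback drifts.**
The feedback drifts of the candidate optimal strategy satisfy
`μ₁*(θ + π) = μ₁*(θ)` and `μ₂*(r, θ + π) = μ₂*(r, θ)` for all `θ ∈ ℝ` and `r > 0`. -/
theorem mustar_pi_periodic (v : ℝ) (hv : 0 < v) :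
    ∀ θ r : ℝ, 0 < r →
      mu1star v (θ + π) = mu1star v θ ∧ mu2star v r (θ + π) = mu2star v r θ :=
  mustar_pi_periodic_general v
end

section
/- Let α ∈ (0, π/8], v > 0 and R₀ > 0, set d₂ = (sin(α/2) + tan α)·cos α / cos(2α) and c₂² = 1 + (d₂ + sin(α/2))² − sin²(α/2). Let β : [0,∞) → ℝ be a continuous function with |β_t| < α/2 for all t ≥ 0, and define X_t = cos(β_t)·R₀ + v ∫₀^t sin(β_t − β_s) ds and Y_t = sin(β_t)·R₀ − v ∫₀^t cos(β_t − β_s) ds for t ≥ 0. If T ≥ 0 is such that X_t tan α + Y_t > 0 for all t ∈ [0, T), then R₀² − 2v ∫₀^T Y_s ds ≤ c₂²·R₀². -/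
/-!
In coordinates `(P, Q)` where the boat moves with velocity `v (-sin β, cos β)`, the squared
distance `P² + Q² = X² + Y²` has derivative `-2vY`. Since `|β| < α/2`, the point `(P, Q)` stays
inside the cone of half-angle `α/2` around the vertical through `(R₀, 0)`, and the condition
`X tan α + Y > 0` keeps it below the ray of angle `3α/2` from the origin. With the `x`-axis these
bound a triangle whose farthest vertex is at distance `R₀ cos (α/2) / cos (2α)`, and
`cos² (α/2) ≤ c₂² cos² (2α)` reduces to `cos (α/2) ≤ 1`.
-/

open Real intervalIntegral Set

namespace SecondLeg

/-- Coordinates in which the boat starts at `(R₀, 0)` and moves with velocity `v (-sin β, cos β)`;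
the rotating-frame coordinates are `X = P cos β + Q sin β` and `Y = P sin β - Q cos β`. -/
noncomputable def P (β : ℝ → ℝ) (v R₀ t : ℝ) : ℝ := R₀ - v * ∫ s in (0:ℝ)..t, sin (β s)

noncomputable def Q (β : ℝ → ℝ) (v t : ℝ) : ℝ := v * ∫ s in (0:ℝ)..t, cos (β s)

variable {β : ℝ → ℝ} {v R₀ : ℝ}

@[simp] lemma P_zero : P β v R₀ 0 = R₀ := by simp [P]

@[simp] lemma Q_zero : Q β v 0 = 0 := by simp [Q]

section Continuous

variable (hβ : Continuous β)
include hβ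

lemma integral_cos_sub (x a b : ℝ) :
    ∫ s in a..b, cos (x - β s) =
      cos x * (∫ s in a..b, cos (β s)) + sin x * ∫ s in a..b, sin (β s) := by
  simp_rw [cos_sub, ← integral_const_mul]
  exact integral_add ((continuous_const.mul (continuous_cos.comp hβ)).intervalIntegrable _ _)
    ((continuous_const.mul (continuous_sin.comp hβ)).intervalIntegrable _ _)

lemma integral_sin_sub (x a b : ℝ) :
    ∫ s in a..b, sin (x - β s) =
      sin x * (∫ s in a..b, cos (β s)) - cos x * ∫ s in a..b, sin (β s) := by
  simp_rw [sin_sub, ← integral_const_mul]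
  exact integral_sub ((continuous_const.mul (continuous_cos.comp hβ)).intervalIntegrable _ _)
    ((continuous_const.mul (continuous_sin.comp hβ)).intervalIntegrable _ _)

lemma cos_mul_add_integral_sin_sub (t : ℝ) :
    cos (β t) * R₀ + v * ∫ s in (0:ℝ)..t, sin (β t - β s) =
      cos (β t) * P β v R₀ t + sin (β t) * Q β v t := by
  rw [integral_sin_sub hβ, P, Q]; ring

lemma sin_mul_sub_integral_cos_sub (t : ℝ) :
    sin (β t) * R₀ - v * ∫ s in (0:ℝ)..t, cos (β t - β s) =
      sin (β t) * P β v R₀ t - cos (β t) * Q β v t := by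
  rw [integral_cos_sub hβ, P, Q]; ring

lemma hasDerivAt_P (t : ℝ) : HasDerivAt (P β v R₀) (-(v * sin (β t))) t :=
  ((((continuous_sin.comp hβ).integral_hasStrictDerivAt 0 t).hasDerivAt).const_mul v).const_sub R₀

lemma hasDerivAt_Q (t : ℝ) : HasDerivAt (Q β v) (v * cos (β t)) t :=
  (((continuous_cos.comp hβ).integral_hasStrictDerivAt 0 t).hasDerivAt).const_mul v

lemma continuous_P : Continuous (P β v R₀) :=
  continuous_iff_continuousAt.2 fun t ↦ (hasDerivAt_P hβ t).continuousAt

lemma continuous_Q : Continuous (Q β v) :=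
  continuous_iff_continuousAt.2 fun t ↦ (hasDerivAt_Q hβ t).continuousAt

lemma sq_P_add_sq_Q (T : ℝ) :
    P β v R₀ T ^ 2 + Q β v T ^ 2 =
      R₀ ^ 2 - 2 * v * ∫ t in (0:ℝ)..T, (sin (β t) * P β v R₀ t - cos (β t) * Q β v t) := by
  have hderiv : ∀ t ∈ uIcc 0 T, HasDerivAt (fun t ↦ P β v R₀ t ^ 2 + Q β v t ^ 2)
      (-2 * v * (sin (β t) * P β v R₀ t - cos (β t) * Q β v t)) t := fun t _ ↦ by
    refine (((hasDerivAt_P (v := v) (R₀ := R₀) hβ t).pow 2).add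
      ((hasDerivAt_Q (v := v) hβ t).pow 2)).congr_deriv ?_
    push_cast; ring
  have hcont : Continuous fun t ↦ -2 * v * (sin (β t) * P β v R₀ t - cos (β t) * Q β v t) := by
    have := continuous_P (v := v) (R₀ := R₀) hβ
    have := continuous_Q (v := v) hβ
    fun_prop
  have := integral_eq_sub_of_hasDerivAt hderiv (hcont.intervalIntegrable 0 T)
  rw [integral_const_mul, P_zero, Q_zero] at this
  linear_combination -this

lemma mul_cos_le_mul_sin_of_forall_Ico {ψ T : ℝ} (hR₀ : 0 ≤ R₀) (hψ : 0 ≤ sin ψ) (hT : 0 ≤ T)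
    (h : ∀ t ∈ Ico 0 T, Q β v t * cos ψ ≤ P β v R₀ t * sin ψ) :
    Q β v T * cos ψ ≤ P β v R₀ T * sin ψ := by
  rcases hT.eq_or_lt with rfl | hT
  · simpa using mul_nonneg hR₀ hψ
  refine le_on_closure h ?_ ?_ (by rw [closure_Ico hT.ne]; exact right_mem_Icc.2 hT.le)
  · exact ((continuous_Q hβ).mul continuous_const).continuousOn
  · exact ((continuous_P hβ).mul continuous_const).continuousOn

end Continuous

lemma Q_nonneg {t : ℝ} (hv : 0 ≤ v) (ht : 0 ≤ t) (hβ : ∀ s ∈ Icc 0 t, 0 ≤ cos (β s)) :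
    0 ≤ Q β v t :=
  mul_nonneg hv (integral_nonneg ht hβ)

lemma cos_mul_P_le {θ t : ℝ} (hβ : Continuous β) (hv : 0 ≤ v) (ht : 0 ≤ t)
    (hθ : ∀ s ∈ Icc 0 t, 0 ≤ sin (θ + β s)) :
    cos θ * P β v R₀ t ≤ cos θ * R₀ + sin θ * Q β v t := by
  have h := integral_sin_sub hβ.neg θ 0 t
  simp only [Pi.neg_apply, sub_neg_eq_add, cos_neg, sin_neg, intervalIntegral.integral_neg] at h
  have : 0 ≤ v * ∫ s in (0:ℝ)..t, sin (θ + β s) := mul_nonneg hv (integral_nonneg ht hθ)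
  rw [h] at this
  rw [P, Q]
  linear_combination this

end SecondLeg

lemma mul_cos_add_lt_mul_sin_add {x y p q : ℝ} (hx : 0 < cos x)
    (h : 0 < (cos y * p + sin y * q) * tan x + (sin y * p - cos y * q)) :
    q * cos (x + y) < p * sin (x + y) := by
  have key : ((cos y * p + sin y * q) * tan x + (sin y * p - cos y * q)) * cos x =
      p * sin (x + y) - q * cos (x + y) := by
    rw [sin_add, cos_add]
    linear_combination (cos y * p + sin y * q) * tan_mul_cos hx.ne'
  linarith [mul_pos h hx]

lemma mul_cos_le_mul_sin_of_le {p q φ ψ : ℝ} (hq : 0 ≤ q) (hφ : 0 < φ) (hφψ : φ ≤ ψ)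
    (hψ : ψ ≤ π / 2) (h : q * cos φ ≤ p * sin φ) : q * cos ψ ≤ p * sin ψ := by
  have hsinφ : 0 < sin φ := sin_pos_of_pos_of_lt_pi hφ (by linarith [pi_pos])
  have hcosφ : 0 ≤ cos φ :=
    cos_nonneg_of_neg_pi_div_two_le_of_le (by linarith [pi_pos]) (by linarith)
  have hp : 0 ≤ p := le_of_mul_le_mul_right (by linarith [mul_nonneg hq hcosφ]) hsinφ
  calc q * cos ψ ≤ q * cos φ := mul_le_mul_of_nonneg_left
        (cos_le_cos_of_nonneg_of_le_pi hφ.le (by linarith [pi_pos]) hφψ) hq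
    _ ≤ p * sin φ := h
    _ ≤ p * sin ψ :=
        mul_le_mul_of_nonneg_left (sin_le_sin_of_le_of_le_pi_div_two (by linarith) hψ hφψ) hp

/-- The hypotheses describe the triangle with vertices `0`, `(r, 0)` and
`(r cos b / cos (a + b)) • (cos a, sin a)` (law of sines); the bound is the squared norm of that
third vertex, which dominates `(p, q)` coordinatewise. -/
lemma cos_add_sq_mul_sq_add_sq_le {a b p q r : ℝ} (ha : 0 < a) (hb : 0 ≤ b) (hab : a + b ≤ π / 2)
    (hq : 0 ≤ q) (hp : cos b * p ≤ cos b * r + sin b * q) (h : q * cos a ≤ p * sin a) :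
    cos (a + b) ^ 2 * (p ^ 2 + q ^ 2) ≤ cos b ^ 2 * r ^ 2 := by
  have hπ := pi_pos
  have hsina : 0 < sin a := sin_pos_of_pos_of_lt_pi ha (by linarith)
  have hcosa : 0 ≤ cos a := cos_nonneg_of_neg_pi_div_two_le_of_le (by linarith) (by linarith)
  have hsinb : 0 ≤ sin b := sin_nonneg_of_nonneg_of_le_pi hb (by linarith)
  have hcosb : 0 < cos b := cos_pos_of_mem_Ioo ⟨by linarith, by linarith⟩
  have hcosab : 0 ≤ cos (a + b) := cos_nonneg_of_neg_pi_div_two_le_of_le (by linarith) hab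
  have hp0 : 0 ≤ p := le_of_mul_le_mul_right (by linarith [mul_nonneg hq hcosa]) hsina
  have hqD : cos (a + b) * q ≤ sin a * cos b * r := by
    rw [cos_add]
    nlinarith [mul_le_mul_of_nonneg_left h hcosb.le, mul_le_mul_of_nonneg_left hp hsina.le]
  have hpD : cos (a + b) * p ≤ cos a * cos b * r := by
    refine le_of_mul_le_mul_left ?_ hcosb
    have := mul_le_mul_of_nonneg_left hp hcosab
    have := mul_le_mul_of_nonneg_left hqD hsinb
    rw [cos_add] at *
    nlinarith
  calc cos (a + b) ^ 2 * (p ^ 2 + q ^ 2) = (cos (a + b) * p) ^ 2 + (cos (a + b) * q) ^ 2 := by ring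
    _ ≤ (cos a * cos b * r) ^ 2 + (sin a * cos b * r) ^ 2 := by gcongr
    _ = cos b ^ 2 * r ^ 2 := by linear_combination (cos b * r) ^ 2 * cos_sq_add_sin_sq a

lemma cos_half_mul_sin_two_mul_le {α : ℝ} (h0 : 0 ≤ α) (hπ : α ≤ π) :
    cos (α / 2) * sin (2 * α) ≤ sin (α / 2) * cos α + sin α + sin (α / 2) * cos (2 * α) := by
  have hs : 0 ≤ sin (α / 2) := sin_nonneg_of_nonneg_of_le_pi (by linarith) (by linarith)
  have hc : 0 ≤ cos (α / 2) :=
    cos_nonneg_of_neg_pi_div_two_le_of_le (by linarith [pi_pos]) (by linarith)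
  have hsinα : sin α = 2 * sin (α / 2) * cos (α / 2) := by rw [← sin_two_mul]; ring_nf
  have hcosα : cos α = 2 * cos (α / 2) ^ 2 - 1 := by rw [cos_sq]; ring_nf
  have key : sin (α / 2) * cos α + sin α + sin (α / 2) * cos (2 * α) - cos (α / 2) * sin (2 * α) =
      2 * sin (α / 2) * cos (α / 2) * (1 - cos (α / 2)) := by
    rw [sin_two_mul, cos_two_mul, hsinα, hcosα]; ring
  nlinarith [mul_nonneg (mul_nonneg hs hc) (sub_nonneg.2 (cos_le_one (α / 2)))]

lemma cos_half_sq_le_mul_cos_two_mul_sq {α d₂ : ℝ} (h0 : 0 ≤ α) (hα : α < π / 4)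
    (hd₂ : d₂ = (sin (α / 2) + tan α) * cos α / cos (2 * α)) :
    cos (α / 2) ^ 2 ≤ (1 + (d₂ + sin (α / 2)) ^ 2 - sin (α / 2) ^ 2) * cos (2 * α) ^ 2 := by
  have hcosα : 0 < cos α := cos_pos_of_mem_Ioo ⟨by linarith [pi_pos], by linarith⟩
  have hcos2α : 0 < cos (2 * α) := cos_pos_of_mem_Ioo ⟨by linarith [pi_pos], by linarith⟩
  have hd : (d₂ + sin (α / 2)) * cos (2 * α) =
      sin (α / 2) * cos α + sin α + sin (α / 2) * cos (2 * α) := by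
    rw [hd₂, add_mul, div_mul_cancel₀ _ hcos2α.ne', add_mul, tan_mul_cos hcosα.ne']
  have hlhs : 0 ≤ cos (α / 2) * sin (2 * α) :=
    mul_nonneg (cos_nonneg_of_neg_pi_div_two_le_of_le (by linarith [pi_pos]) (by linarith))
      (sin_nonneg_of_nonneg_of_le_pi (by linarith) (by linarith))
  have hsq := pow_le_pow_left₀ hlhs (hd ▸ cos_half_mul_sin_two_mul_le h0 (by linarith)) 2
  nlinarith [sin_sq_add_cos_sq (α / 2), sin_sq_add_cos_sq (2 * α)]

open SecondLeg in
/-- **Contraction of the distance to the target during the second leg.**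
A boat on starboard tack starting from `(R₀, 0)` in a wind `β` that never deviates
by more than `α/2` has squared distance `R_t² = R₀² − 2v ∫₀^t Y_s ds`; as long as it
stays above the tacking line (`X_t tan α + Y_t > 0` on `[0, T)`), its squared
distance at time `T` is at most `c₂²·R₀²`, where
`c₂² = 1 + (d₂ + sin(α/2))² − sin²(α/2)` and
`d₂ = (sin(α/2) + tan α) cos α / cos(2α)`. -/
theorem second_leg_contraction
    (α v R₀ : ℝ) (hα : α ∈ Set.Ioc 0 (π / 8)) (hv : 0 < v) (hR₀ : 0 < R₀)
    (d₂ c₂sq : ℝ)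
    (hd₂ : d₂ = (Real.sin (α / 2) + Real.tan α) * Real.cos α / Real.cos (2 * α))
    (hc₂ : c₂sq = 1 + (d₂ + Real.sin (α / 2)) ^ 2 - Real.sin (α / 2) ^ 2)
    (β : ℝ → ℝ) (hβcont : Continuous β) (hβ : ∀ t : ℝ, 0 ≤ t → |β t| < α / 2)
    (X Y : ℝ → ℝ)
    (hX : ∀ t : ℝ, X t = Real.cos (β t) * R₀ + v * ∫ s in (0:ℝ)..t, Real.sin (β t - β s))
    (hY : ∀ t : ℝ, Y t = Real.sin (β t) * R₀ - v * ∫ s in (0:ℝ)..t, Real.cos (β t - β s))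
    (T : ℝ) (hT : 0 ≤ T)
    (hstay : ∀ t : ℝ, t ∈ Set.Ico 0 T → 0 < X t * Real.tan α + Y t) :
    R₀ ^ 2 - 2 * v * ∫ s in (0:ℝ)..T, Y s ≤ c₂sq * R₀ ^ 2 := by
  obtain ⟨hα0, hα8⟩ := hα
  have hπ := pi_pos
  have hβ' : ∀ t, 0 ≤ t → -(α / 2) < β t ∧ β t < α / 2 := fun t ht ↦ abs_lt.1 (hβ t ht)
  have hQ : ∀ t, 0 ≤ t → 0 ≤ Q β v t := fun t ht ↦ Q_nonneg hv.le ht fun s hs ↦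
    (cos_pos_of_mem_Ioo ⟨by linarith [hβ' s hs.1], by linarith [hβ' s hs.1]⟩).le
  have hbelow : ∀ t ∈ Ico 0 T, Q β v t * cos (3 * α / 2) ≤ P β v R₀ t * sin (3 * α / 2) := by
    intro t ht
    have hstay' := hstay t ht
    rw [hX, hY, cos_mul_add_integral_sin_sub hβcont, sin_mul_sub_integral_cos_sub hβcont] at hstay'
    refine mul_cos_le_mul_sin_of_le (hQ t ht.1) (by linarith [hβ' t ht.1])
      (by linarith [hβ' t ht.1]) (by linarith) (mul_cos_add_lt_mul_sin_add ?_ hstay').le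
    exact cos_pos_of_mem_Ioo ⟨by linarith, by linarith⟩
  have hcone := cos_mul_P_le (θ := α / 2) (R₀ := R₀) hβcont hv.le hT fun s hs ↦
    sin_nonneg_of_nonneg_of_le_pi (by linarith [hβ' s hs.1]) (by linarith [hβ' s hs.1])
  have htriangle := cos_add_sq_mul_sq_add_sq_le (a := 3 * α / 2) (by linarith) (by linarith)
    (by linarith) (hQ T hT) hcone
    (mul_cos_le_mul_sin_of_forall_Ico hβcont hR₀.le (sin_nonneg_of_nonneg_of_le_pi
      (by linarith) (by linarith)) hT hbelow)
  rw [show 3 * α / 2 + α / 2 = 2 * α by ring] at htriangle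
  have hYint : ∫ s in (0:ℝ)..T, Y s =
      ∫ t in (0:ℝ)..T, (sin (β t) * P β v R₀ t - cos (β t) * Q β v t) :=
    integral_congr fun t _ ↦ by rw [hY, sin_mul_sub_integral_cos_sub hβcont]
  have hcos2α : 0 < cos (2 * α) := cos_pos_of_mem_Ioo ⟨by linarith, by linarith⟩
  have hconst := cos_half_sq_le_mul_cos_two_mul_sq hα0.le (by linarith) hd₂
  rw [hYint, ← sq_P_add_sq_Q hβcont, hc₂]
  refine le_of_mul_le_mul_left ?_ (pow_pos hcos2α 2)
  linear_combination htriangle + mul_le_mul_of_nonneg_right hconst (sq_nonneg R₀)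
end
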